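/- Fix integers d ≥ 1, n ≥ 1 and a vector t = (t₁,…,t_d) ∈ ℝ^d with ‖t‖ ≠ 0. For k ≥ 0 let M_k be the (finite-dimensional, Euclidean) space of real arrays Ψ = {ψ_{i₁…i_k}}, 1 ≤ i_j ≤ d, symmetric under all permutations of the indices (M₀ = ℝ). Define T_k : M_k → M_{k−1} by (T_kΨ)_{i₁…i_{k−1}} = Σ_{j=1}^d ψ_{i₁…i_{k−1}j} t_j, and S_k : M_k → M_{k+1} by (S_kΨ)_{i₁…i_{k+1}} = Σ_{j=1}^{k+1} ψ_{i₁…î_j…i_{k+1}} t_{i_j} (the hat denotes omission of the index i_j). Then: (i) T_{k+1}S_k = ‖t‖² I_k + S_{k−1}T_k on M_k for all k ≥ 1; (ii) for every F ∈ M_{n−1}, the element Ψ_n = ‖t‖^{−2} Σ_{p=1}^{n} (−1)^{p+1} (p!)^{−1} ‖t‖^{−2(p−1)} S^p T^{p−1} F (where S^p T^{p−1}F means S_{n−1}∘…∘S_{n−p}∘T_{n−p+1}∘…∘T_{n−1} applied to F, i.e. p−1 annihilations followed by p creations) satisfies T_n Ψ_n = F; (iii) the resulting solution operator R_{n−1}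 : M_{n−1} → M_n, F ↦ Ψ_n, satisfies ‖R_{n−1}‖ ≤ C_n ‖t‖^{−1} with a constant C_n depending only on n and d. -/

import Mathlib

noncomputable section

/-- The space `M_k^{(d)}` of real arrays indexed by multi-indices `(i₁,…,i_k)`,
`1 ≤ i_j ≤ d`. -/
def MArr (d k : ℕ) : Type := (Fin k → Fin d) → ℝ

instance (d k : ℕ) : AddCommGroup (MArr d k) := Pi.addCommGroup
instance (d k : ℕ) : Module ℝ (MArr d k) := Pi.Function.module _ _ _

/-- Symmetry of an array under all permutations of its indices. -/
def MSymm {d k : ℕ} (Ψ : MArr d k) : Prop :=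
  ∀ σ : Equiv.Perm (Fin k), ∀ idx : Fin k → Fin d, Ψ (idx ∘ σ) = Ψ idx

/-- `‖t‖²`. -/
def tsq {d : ℕ} (t : Fin d → ℝ) : ℝ := ∑ i, t i ^ 2

/-- The Euclidean norm of an array. -/
def arrNorm {d k : ℕ} (Ψ : MArr d k) : ℝ := Real.sqrt (∑ idx : Fin k → Fin d, Ψ idx ^ 2)

/-- The annihilation operator `T_k : M_k → M_{k-1}`,
`(TΨ)_{i₁…i_{k-1}} = Σ_j ψ_{i₁…i_{k-1} j} t_j`. -/
def Tann {d k : ℕ} (t : Fin d → ℝ) (Ψ : MArr d (k + 1)) : MArr d k :=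
  fun idx => ∑ j : Fin d, Ψ (Fin.snoc idx j) * t j

/-- The creation operator `S_k : M_k → M_{k+1}`,
`(SΨ)_{i₁…i_{k+1}} = Σ_{j=1}^{k+1} ψ_{i₁…î_j…i_{k+1}} t_{i_j}`. -/
def Scre {d k : ℕ} (t : Fin d → ℝ) (Ψ : MArr d k) : MArr d (k + 1) :=
  fun idx => ∑ j : Fin (k + 1), Ψ (idx ∘ j.succAbove) * t (idx j)

/-- Iterated annihilation `T^p : M_{k+p} → M_k`. -/
def Titer {d k : ℕ} (t : Fin d → ℝ) : (p : ℕ) → MArr d (k + p) → MArr d k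
  | 0, Ψ => Ψ
  | p + 1, Ψ => Titer t p (Tann t Ψ)

/-- Iterated creation `S^p : M_k → M_{k+p}`. -/
def Siter {d k : ℕ} (t : Fin d → ℝ) : (p : ℕ) → MArr d k → MArr d (k + p)
  | 0, Ψ => Ψ
  | p + 1, Ψ => Scre t (Siter t p Ψ)

/-- Re-indexing an array along an equality of degrees. -/
def castArr {d k k' : ℕ} (h : k = k') (Ψ : MArr d k) : MArr d k' :=
  fun idx => Ψ fun i => idx (Fin.cast h i)

/-- The solution operator `R_{n-1} : M_{n-1} → M_n`,
`R F = Σ_{p=1}^n (-1)^{p+1} (p!)⁻¹ ‖t‖^{-2p} S^p T^{p-1} F`. -/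
def Rop {d : ℕ} (n : ℕ) (t : Fin d → ℝ) (F : MArr d (n - 1)) : MArr d n :=
  ∑ p ∈ (Finset.Icc 1 n).attach,
    ((-1 : ℝ) ^ ((p : ℕ) + 1) * ((Nat.factorial (p : ℕ) : ℝ))⁻¹ * (tsq t ^ (p : ℕ))⁻¹) •
      castArr (show (n - (p : ℕ)) + (p : ℕ) = n by
          have := Finset.mem_Icc.mp p.2; omega)
        (Siter t (p : ℕ)
          (Titer (k := n - (p : ℕ)) t ((p : ℕ) - 1)
            (castArr (show n - 1 = (n - (p : ℕ)) + ((p : ℕ) - 1) by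
                have := Finset.mem_Icc.mp p.2; omega) F)))

/-!
In `(T S Ψ)_I = Σ_j (S Ψ)_{I j} t_j` the term of `S` that deletes the last index `j` contributes
`‖t‖² ψ_I` and the others give `(S T Ψ)_I`; this is (i). Iterating it,
`T S^{q+1} = (q+1)‖t‖² S^q + S^{q+1} T`. With `c_p = (-1)^{p+1} / (p! ‖t‖^{2p})` this reads
`T (c_p S^p T^{p-1} F) = c_p S^p T^p F - c_{p-1} S^{p-1} T^{p-1} F`, so `T (R F)` telescopes to
`c_n S^n T^n F - c_0 F = F`, because `T^n` vanishes on `M_{n-1}` and `c_0 = -1`. The bound follows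
from `‖T‖ ≤ ‖t‖`, `‖S_k‖ ≤ (k+1)‖t‖` and `|c_p| ‖t‖^{2p-1} ≤ ‖t‖⁻¹`.
-/

section Algebra

variable {d : ℕ} (t : Fin d → ℝ)

lemma MArr.smul_apply {k : ℕ} (c : ℝ) (Ψ : MArr d k) (idx : Fin k → Fin d) :
    (c • Ψ) idx = c * Ψ idx := rfl

lemma MArr.add_apply {k : ℕ} (Ψ Φ : MArr d k) (idx : Fin k → Fin d) :
    (Ψ + Φ) idx = Ψ idx + Φ idx := rfl

lemma MArr.sum_apply {k : ℕ} {ι : Type*} (s : Finset ι) (f : ι → MArr d k)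
    (idx : Fin k → Fin d) : (∑ i ∈ s, f i) idx = ∑ i ∈ s, f i idx :=
  Finset.sum_apply _ _ _

lemma castArr_castArr {a b c : ℕ} (h₁ : a = b) (h₂ : b = c) (Ψ : MArr d a) :
    castArr h₂ (castArr h₁ Ψ) = castArr (h₁.trans h₂) Ψ := by
  subst h₁ h₂; rfl

lemma Tann_castArr {a b : ℕ} (h₁ : a + 1 = b + 1) (h₂ : a = b) (Ψ : MArr d (a + 1)) :
    Tann t (castArr h₁ Ψ) = castArr h₂ (Tann t Ψ) := by
  subst h₂; rfl

lemma Scre_castArr {a b : ℕ} (h₁ : a = b) (h₂ : a + 1 = b + 1) (Ψ : MArr d a) :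
    Scre t (castArr h₁ Ψ) = castArr h₂ (Scre t Ψ) := by
  subst h₁; rfl

lemma Tann_smul {k : ℕ} (c : ℝ) (Ψ : MArr d (k + 1)) : Tann t (c • Ψ) = c • Tann t Ψ := by
  funext idx
  simp only [Tann, MArr.smul_apply, Finset.mul_sum, mul_assoc]

lemma Tann_sum {k : ℕ} {ι : Type*} (s : Finset ι) (f : ι → MArr d (k + 1)) :
    Tann t (∑ i ∈ s, f i) = ∑ i ∈ s, Tann t (f i) := by
  funext idx
  simp only [Tann, MArr.sum_apply, Finset.sum_mul]
  exact Finset.sum_comm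

lemma Scre_smul {k : ℕ} (c : ℝ) (Ψ : MArr d k) : Scre t (c • Ψ) = c • Scre t Ψ := by
  funext idx
  simp only [Scre, MArr.smul_apply, Finset.mul_sum, mul_assoc]

lemma Scre_add {k : ℕ} (Ψ Φ : MArr d k) : Scre t (Ψ + Φ) = Scre t Ψ + Scre t Φ := by
  funext idx
  simp only [Scre, MArr.add_apply, add_mul, Finset.sum_add_distrib]

lemma Titer_succ' {k : ℕ} (p : ℕ) (Ψ : MArr d (k + (p + 1))) (h : k + (p + 1) = k + 1 + p) :
    Titer t (p + 1) Ψ = Tann t (Titer (k := k + 1) t p (castArr h Ψ)) := by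
  induction p with
  | zero => rfl
  | succ p ih =>
    rw [Titer, ih (Tann t Ψ) (by omega), ← Tann_castArr t h]
    rfl

end Algebra

section Commutation

variable {d : ℕ} (t : Fin d → ℝ)

lemma Fin.snoc_comp_succAbove_castSucc {α : Type*} {k : ℕ} (idx : Fin (k + 1) → α) (a : α)
    (i : Fin (k + 1)) :
    (Fin.snoc idx a : Fin (k + 2) → α) ∘ i.castSucc.succAbove = Fin.snoc (idx ∘ i.succAbove) a := by
  funext l
  induction l using Fin.lastCases with
  | last =>
    simp only [Function.comp_apply, Fin.snoc_last,
      Fin.succAbove_castSucc_of_le _ _ (Fin.le_last i), Fin.succ_last]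
  | cast l =>
    simp only [Function.comp_apply, Fin.snoc_castSucc, Fin.castSucc_succAbove_castSucc]

theorem Tann_Scre {k : ℕ} (Ψ : MArr d (k + 1)) :
    Tann t (Scre t Ψ) = tsq t • Ψ + Scre t (Tann t Ψ) := by
  funext idx
  have split_last (j : Fin d) :
      (∑ m : Fin (k + 2), Ψ ((Fin.snoc idx j : Fin (k + 2) → Fin d) ∘ m.succAbove)
          * t ((Fin.snoc idx j : Fin (k + 2) → Fin d) m)) * t j
        = Ψ idx * t j * t j
          + ∑ i : Fin (k + 1), Ψ (Fin.snoc (idx ∘ i.succAbove) j) * t (idx i) * t j := by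
    rw [Fin.sum_univ_castSucc, add_mul, Finset.sum_mul, add_comm, Fin.succAbove_last,
      Fin.snoc_last, Fin.snoc_comp_castSucc]
    simp only [Fin.snoc_comp_succAbove_castSucc, Fin.snoc_castSucc]
  simp only [Tann, Scre, MArr.add_apply, MArr.smul_apply]
  rw [Finset.sum_congr rfl fun j _ => split_last j, Finset.sum_add_distrib, Finset.sum_comm]
  simp only [tsq, Finset.sum_mul]
  congr 1 <;> refine Finset.sum_congr rfl fun _ _ => ?_
  · ring
  · exact Finset.sum_congr rfl fun _ _ => by ring

theorem Tann_Scre_of_zero (Ψ : MArr d 0) : Tann t (Scre t Ψ) = tsq t • Ψ := by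
  funext idx
  have single_term (j : Fin d) : Scre t Ψ (Fin.snoc idx j) = Ψ idx * t j := by
    rw [Scre, Fin.sum_univ_succ, Fin.sum_univ_zero, add_zero]
    exact congrArg₂ (· * ·) (congrArg Ψ (Subsingleton.elim _ _)) rfl
  simp only [Tann, single_term, MArr.smul_apply, tsq, Finset.sum_mul]
  exact Finset.sum_congr rfl fun j _ => by ring

lemma Siter_succ {k : ℕ} (p : ℕ) (Ψ : MArr d k) : Siter t (p + 1) Ψ = Scre t (Siter t p Ψ) :=
  rfl

theorem Tann_Siter_succ {k : ℕ} (q : ℕ) (Φ : MArr d (k + 1)) (h : k + (q + 1) = k + 1 + q) :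
    Tann t (Siter t (q + 1) Φ)
      = (((q : ℝ) + 1) * tsq t) • Siter t q Φ + castArr h (Siter t (q + 1) (Tann t Φ)) := by
  induction q with
  | zero =>
    simp only [Nat.cast_zero, zero_add, one_mul]
    exact Tann_Scre t Φ
  | succ q ih =>
    rw [Siter_succ, Tann_Scre, ih (by omega), Scre_add, Scre_smul, Scre_castArr t _ h]
    simp only [← Siter_succ]
    rw [← add_assoc, ← add_smul]
    congr 2
    push_cast
    ring

theorem Tann_Siter_succ_of_zero (q : ℕ) (Φ : MArr d 0) :
    Tann t (Siter t (q + 1) Φ) = (((q : ℝ) + 1) * tsq t) • Siter t q Φ := by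
  induction q with
  | zero =>
    simp only [Nat.cast_zero, zero_add, one_mul]
    exact Tann_Scre_of_zero t Φ
  | succ q ih =>
    rw [Siter_succ, Tann_Scre, ih, Scre_smul, ← Siter_succ, ← add_smul]
    congr 1
    push_cast
    ring

end Commutation

section Sandwich

variable {d : ℕ} (t : Fin d → ℝ)

/-- `S^p T^r F ∈ M_n` for `F ∈ M_m`, through `M_{m-r}`; it is `0` when the degrees do not fit,
so that `S^p T^r F = 0` for `r > m`. -/
def STiter {m : ℕ} (n p r : ℕ) (F : MArr d m) : MArr d n :=
  if h : r ≤ m ∧ m - r + p = n then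
    castArr h.2 (Siter t p (Titer (k := m - r) t r (castArr (by omega) F)))
  else 0

lemma STiter_eq {m n p r a : ℕ} (hm : m = a + r) (hn : a + p = n) (F : MArr d m) :
    STiter t n p r F = castArr hn (Siter t p (Titer (k := a) t r (castArr hm F))) := by
  have change_middle : ∀ a' (_ : a' = a) (hm' : m = a' + r) (hn' : a' + p = n),
      castArr hn' (Siter t p (Titer (k := a') t r (castArr hm' F)))
        = castArr hn (Siter t p (Titer (k := a) t r (castArr hm F))) := by
    rintro _ rfl _ _
    rfl
  rw [STiter, dif_pos ⟨by omega, by omega⟩]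
  exact change_middle _ (by omega) _ _

lemma STiter_of_lt {m n p r : ℕ} (h : m < r) (F : MArr d m) : STiter t n p r F = 0 :=
  dif_neg (by omega)

lemma STiter_zero_zero {m : ℕ} (F : MArr d m) : STiter t m 0 0 F = F :=
  STiter_eq t (p := 0) (r := 0) (a := m) rfl rfl F

theorem Tann_STiter {m q : ℕ} (hq : q ≤ m) (F : MArr d m) :
    Tann t (STiter t (m + 1) (q + 1) q F)
      = (((q : ℝ) + 1) * tsq t) • STiter t m q q F + STiter t m (q + 1) (q + 1) F := by
  obtain ⟨a, rfl⟩ : ∃ a, m = a + q := ⟨m - q, by omega⟩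
  rw [STiter_eq t (n := a + q + 1) (p := q + 1) (r := q) (a := a) rfl rfl,
    STiter_eq t (p := q) (r := q) (a := a) rfl rfl]
  cases a with
  | zero =>
    rw [STiter_of_lt t (by omega), add_zero]
    exact Tann_Siter_succ_of_zero t q _
  | succ b =>
    refine (Tann_Siter_succ t q (Titer (k := b + 1) t q F) (by omega)).trans ?_
    rw [STiter_eq t (a := b) (by omega) (by omega), Titer_succ' t q _ (by omega), castArr_castArr]
    rfl

end Sandwich

section Solution

variable {d : ℕ} (t : Fin d → ℝ)

def rCoeff (τ : ℝ) (p : ℕ) : ℝ := (-1) ^ (p + 1) * ((Nat.factorial p : ℝ))⁻¹ * (τ ^ p)⁻¹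

lemma rCoeff_zero (τ : ℝ) : rCoeff τ 0 = -1 := by
  simp [rCoeff]

lemma rCoeff_succ_mul {τ : ℝ} (hτ : τ ≠ 0) (q : ℕ) :
    rCoeff τ (q + 1) * (((q : ℝ) + 1) * τ) = -rCoeff τ q := by
  rw [rCoeff, rCoeff, Nat.factorial_succ]
  push_cast
  field_simp
  ring

lemma Rop_eq_sum {n : ℕ} (F : MArr d (n - 1)) :
    Rop n t F = ∑ p ∈ Finset.Icc 1 n, rCoeff (tsq t) p • STiter t n p (p - 1) F := by
  rw [Rop, ← Finset.sum_attach _ fun p => rCoeff (tsq t) p • STiter t n p (p - 1) F]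
  refine Finset.sum_congr rfl fun p _ => ?_
  have hp := Finset.mem_Icc.mp p.2
  rw [STiter_eq t (a := n - p) (by omega) (by omega)]
  rfl

lemma Rop_succ_eq_sum_range {m : ℕ} (F : MArr d m) :
    Rop (m + 1) t F
      = ∑ q ∈ Finset.range (m + 1), rCoeff (tsq t) (q + 1) • STiter t (m + 1) (q + 1) q F := by
  rw [Rop_eq_sum, ← Finset.Ico_add_one_right_eq_Icc, Finset.sum_Ico_eq_sum_range]
  simp only [add_tsub_cancel_right, add_comm 1]

theorem Tann_Rop (ht : tsq t ≠ 0) {m : ℕ} (F : MArr d m) : Tann t (Rop (m + 1) t F) = F := by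
  have telescope : ∀ q ∈ Finset.range (m + 1),
      Tann t (rCoeff (tsq t) (q + 1) • STiter t (m + 1) (q + 1) q F)
        = rCoeff (tsq t) (q + 1) • STiter t m (q + 1) (q + 1) F
          - rCoeff (tsq t) q • STiter t m q q F := by
    intro q hq
    rw [Tann_smul, Tann_STiter t (Finset.mem_range_succ_iff.mp hq), smul_add, smul_smul,
      rCoeff_succ_mul ht, neg_smul]
    abel
  rw [Rop_succ_eq_sum_range, Tann_sum, Finset.sum_congr rfl telescope,
    Finset.sum_range_sub (fun q => rCoeff (tsq t) q • STiter t m q q F),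
    STiter_of_lt t (Nat.lt_succ_self m), STiter_zero_zero, rCoeff_zero, smul_zero, zero_sub, neg_one_smul, neg_neg]

end Solution

section Symmetry

variable {d : ℕ} (t : Fin d → ℝ)

/-- The permutation of `Fin (k + 1)` that fixes `p` and acts as `τ` on the other points. -/
def Fin.extendPerm {k : ℕ} (p : Fin (k + 1)) (τ : Equiv.Perm (Fin k)) : Equiv.Perm (Fin (k + 1)) :=
  (finSuccEquiv' p).trans (τ.optionCongr.trans (finSuccEquiv' p).symm)

lemma Fin.insertNth_comp_extendPerm {α : Type*} {k : ℕ} (p : Fin (k + 1)) (a : α)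
    (idx : Fin k → α) (τ : Equiv.Perm (Fin k)) :
    Fin.insertNth p a idx ∘ Fin.extendPerm p τ = Fin.insertNth p a (idx ∘ τ) := by
  funext l
  refine Fin.succAboveCases p ?_ (fun i => ?_) l
  · simp [Fin.extendPerm, finSuccEquiv'_at, finSuccEquiv'_symm_none]
  · simp [Fin.extendPerm, finSuccEquiv'_succAbove, finSuccEquiv'_symm_some]

lemma Fin.exists_perm_comp_succAbove {k : ℕ} (σ : Equiv.Perm (Fin (k + 1))) (j : Fin (k + 1)) :
    ∃ τ : Equiv.Perm (Fin k), σ ∘ j.succAbove = (σ j).succAbove ∘ τ := by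
  let e : Equiv.Perm (Option (Fin k)) :=
    (finSuccEquiv' j).symm.trans (σ.trans (finSuccEquiv' (σ j)))
  refine ⟨Equiv.removeNone e, funext fun i => ?_⟩
  obtain ⟨z, hz⟩ := Fin.exists_succAbove_eq fun h => Fin.succAbove_ne j i (σ.injective h)
  have he : e (some i) = some z := by
    simp only [e, Equiv.trans_apply, finSuccEquiv'_symm_some, ← hz, finSuccEquiv'_succAbove]
  rw [Function.comp_apply, Function.comp_apply, ← hz,
    Option.some_injective _ ((Equiv.removeNone_some e ⟨z, he⟩).trans he)]

lemma MSymm.castArr {a b : ℕ} (h : a = b) {Ψ : MArr d a} (hΨ : MSymm Ψ) :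
    MSymm (castArr h Ψ) := by
  subst h
  exact hΨ

lemma MSymm.smul {k : ℕ} (c : ℝ) {Ψ : MArr d k} (hΨ : MSymm Ψ) : MSymm (c • Ψ) :=
  fun σ idx => congrArg (c * ·) (hΨ σ idx)

lemma MSymm.sum {k : ℕ} {ι : Type*} (s : Finset ι) {f : ι → MArr d k}
    (hf : ∀ i ∈ s, MSymm (f i)) : MSymm (∑ i ∈ s, f i) := by
  intro σ idx
  simp only [MArr.sum_apply]
  exact Finset.sum_congr rfl fun i hi => hf i hi σ idx

lemma MSymm.tann {k : ℕ} {Ψ : MArr d (k + 1)} (hΨ : MSymm Ψ) : MSymm (Tann t Ψ) := by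
  intro τ idx
  refine Finset.sum_congr rfl fun j _ => ?_
  rw [← Fin.insertNth_last', ← Fin.insertNth_last', ← Fin.insertNth_comp_extendPerm, hΨ]

lemma MSymm.scre {k : ℕ} {Ψ : MArr d k} (hΨ : MSymm Ψ) : MSymm (Scre t Ψ) := by
  intro σ idx
  rw [Scre, Scre, ← Equiv.sum_comp σ fun j => Ψ (idx ∘ j.succAbove) * t (idx j)]
  refine Finset.sum_congr rfl fun j _ => ?_
  obtain ⟨τ, hτ⟩ := Fin.exists_perm_comp_succAbove σ j
  have hidx : (idx ∘ σ) ∘ j.succAbove = (idx ∘ (σ j).succAbove) ∘ τ := by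
    rw [Function.comp_assoc, hτ, Function.comp_assoc]
  rw [Function.comp_apply, hidx, hΨ]

lemma MSymm.titer {k : ℕ} (p : ℕ) {Ψ : MArr d (k + p)} (hΨ : MSymm Ψ) :
    MSymm (Titer t p Ψ) := by
  induction p with
  | zero => exact hΨ
  | succ p ih => exact ih (hΨ.tann t)

lemma MSymm.siter {k : ℕ} (p : ℕ) {Ψ : MArr d k} (hΨ : MSymm Ψ) :
    MSymm (Siter t p Ψ) := by
  induction p with
  | zero => exact hΨ
  | succ p ih => exact ih.scre t

lemma MSymm.stiter {m : ℕ} (n p r : ℕ) {F : MArr d m} (hF : MSymm F) :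
    MSymm (STiter t n p r F) := by
  unfold STiter
  split_ifs
  · exact (((hF.castArr _).titer t r).siter t p).castArr _
  · exact fun _ _ => rfl

theorem MSymm.rop (n : ℕ) {F : MArr d (n - 1)} (hF : MSymm F) : MSymm (Rop n t F) := by
  rw [Rop_eq_sum]
  exact MSymm.sum _ fun p _ => (hF.stiter t n p (p - 1)).smul _

end Symmetry

section Norm

variable {d : ℕ} (t : Fin d → ℝ)

lemma tsq_nonneg : 0 ≤ tsq t := Finset.sum_nonneg fun _ _ => sq_nonneg _

lemma tsq_pos (ht : t ≠ 0) : 0 < tsq t := by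
  obtain ⟨i, hi⟩ := Function.ne_iff.mp ht
  have hi : t i ≠ 0 := hi
  exact Finset.sum_pos' (fun _ _ => sq_nonneg _) ⟨i, Finset.mem_univ i, by positivity⟩

lemma abs_rCoeff_le {τ : ℝ} (hτ : 0 < τ) (p : ℕ) : |rCoeff τ p| ≤ (τ ^ p)⁻¹ := by
  rw [rCoeff, abs_mul, abs_mul, abs_pow, abs_neg, abs_one, one_pow, one_mul, abs_inv, abs_inv,
    Nat.abs_cast, abs_of_pos (pow_pos hτ p)]
  refine mul_le_of_le_one_left (by positivity) (inv_le_one_of_one_le₀ ?_)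
  exact_mod_cast Nat.factorial_pos p

lemma arrNorm_eq_norm {k : ℕ} (Ψ : MArr d k) :
    arrNorm Ψ = ‖(WithLp.toLp 2 Ψ : EuclideanSpace ℝ (Fin k → Fin d))‖ := by
  simp only [arrNorm, EuclideanSpace.norm_eq, Real.norm_eq_abs, sq_abs]

lemma arrNorm_nonneg {k : ℕ} (Ψ : MArr d k) : 0 ≤ arrNorm Ψ := Real.sqrt_nonneg _

lemma arrNorm_zero {k : ℕ} : arrNorm (0 : MArr d k) = 0 := by
  rw [arrNorm_eq_norm]
  exact norm_zero

lemma arrNorm_add_le {k : ℕ} (Ψ Φ : MArr d k) : arrNorm (Ψ + Φ) ≤ arrNorm Ψ + arrNorm Φ := by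
  simp only [arrNorm_eq_norm]
  exact norm_add_le _ _

lemma arrNorm_sum_le {k : ℕ} {ι : Type*} (s : Finset ι) (f : ι → MArr d k) :
    arrNorm (∑ i ∈ s, f i) ≤ ∑ i ∈ s, arrNorm (f i) :=
  Finset.le_sum_of_subadditive arrNorm arrNorm_zero.le arrNorm_add_le s f

lemma arrNorm_smul {k : ℕ} (c : ℝ) (Ψ : MArr d k) : arrNorm (c • Ψ) = |c| * arrNorm Ψ := by
  simp only [arrNorm_eq_norm, ← Real.norm_eq_abs, ← norm_smul]
  rfl

lemma arrNorm_castArr {a b : ℕ} (h : a = b) (Ψ : MArr d a) : arrNorm (castArr h Ψ) = arrNorm Ψ := by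
  subst h
  rfl

lemma Fin.sum_sum_insertNth {α M : Type*} [Fintype α] [AddCommMonoid M] {k : ℕ} (p : Fin (k + 1))
    (g : (Fin (k + 1) → α) → M) :
    ∑ a, ∑ idx : Fin k → α, g (Fin.insertNth p a idx) = ∑ idx, g idx := by
  rw [← Fintype.sum_prod_type']
  exact Fintype.sum_equiv (Fin.insertNthEquiv (fun _ => α) p) _ _ fun _ => rfl

lemma sum_sq_Tann_le {k : ℕ} (Ψ : MArr d (k + 1)) :
    ∑ idx, Tann t Ψ idx ^ 2 ≤ tsq t * ∑ idx, Ψ idx ^ 2 :=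
  calc ∑ idx, Tann t Ψ idx ^ 2
      ≤ ∑ idx : Fin k → Fin d, (∑ j, Ψ (Fin.snoc idx j) ^ 2) * tsq t :=
        Finset.sum_le_sum fun idx _ => Finset.sum_mul_sq_le_sq_mul_sq _ _ _
    _ = tsq t * ∑ idx, Ψ idx ^ 2 := by
        rw [← Finset.sum_mul, mul_comm, Finset.sum_comm, ← Fin.sum_sum_insertNth (Fin.last k)]
        simp only [Fin.insertNth_last']

lemma sum_sq_Scre_le {k : ℕ} (Ψ : MArr d k) :
    ∑ idx, Scre t Ψ idx ^ 2 ≤ ((k : ℝ) + 1) ^ 2 * tsq t * ∑ idx, Ψ idx ^ 2 :=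
  calc ∑ idx, Scre t Ψ idx ^ 2
      ≤ ∑ idx : Fin (k + 1) → Fin d,
          ((k : ℝ) + 1) * ∑ j, (Ψ (idx ∘ j.succAbove) * t (idx j)) ^ 2 :=
        Finset.sum_le_sum fun idx _ => (sq_sum_le_card_mul_sum_sq (s := Finset.univ)
          (f := fun j : Fin (k + 1) => Ψ (idx ∘ j.succAbove) * t (idx j))).trans_eq (by simp)
    _ = ((k : ℝ) + 1) * ∑ _j : Fin (k + 1), tsq t * ∑ idx, Ψ idx ^ 2 := by
        rw [← Finset.mul_sum, Finset.sum_comm]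
        refine congrArg _ (Finset.sum_congr rfl fun j _ => ?_)
        rw [← Fin.sum_sum_insertNth j, tsq, Finset.sum_mul_sum]
        simp only [Fin.insertNth_apply_same, Fin.insertNth_comp_succAbove, mul_pow, mul_comm]
    _ = ((k : ℝ) + 1) ^ 2 * tsq t * ∑ idx, Ψ idx ^ 2 := by
        rw [Finset.sum_const, Finset.card_univ, Fintype.card_fin, nsmul_eq_mul]
        push_cast
        ring

lemma arrNorm_Tann_le {k : ℕ} (Ψ : MArr d (k + 1)) :
    arrNorm (Tann t Ψ) ≤ √(tsq t) * arrNorm Ψ := by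
  rw [arrNorm, arrNorm, ← Real.sqrt_mul (tsq_nonneg t)]
  exact Real.sqrt_le_sqrt (sum_sq_Tann_le t Ψ)

lemma arrNorm_Scre_le {k : ℕ} (Ψ : MArr d k) :
    arrNorm (Scre t Ψ) ≤ ((k : ℝ) + 1) * √(tsq t) * arrNorm Ψ := by
  rw [arrNorm, arrNorm, ← Real.sqrt_sq (by positivity : (0 : ℝ) ≤ k + 1),
    ← Real.sqrt_mul (sq_nonneg _), ← Real.sqrt_mul (mul_nonneg (sq_nonneg _) (tsq_nonneg t))]
  exact Real.sqrt_le_sqrt (sum_sq_Scre_le t Ψ)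

lemma arrNorm_Titer_le {k : ℕ} (p : ℕ) (Ψ : MArr d (k + p)) :
    arrNorm (Titer t p Ψ) ≤ √(tsq t) ^ p * arrNorm Ψ := by
  induction p with
  | zero => rw [pow_zero, one_mul]; rfl
  | succ p ih =>
    calc arrNorm (Titer t p (Tann t Ψ))
        ≤ √(tsq t) ^ p * arrNorm (Tann t Ψ) := ih _
      _ ≤ √(tsq t) ^ p * (√(tsq t) * arrNorm Ψ) := by gcongr; exact arrNorm_Tann_le t Ψ
      _ = √(tsq t) ^ (p + 1) * arrNorm Ψ := by ring

lemma arrNorm_Siter_le {k : ℕ} (p : ℕ) (Ψ : MArr d k) :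
    arrNorm (Siter t p Ψ) ≤ ((k + p : ℕ) : ℝ) ^ p * √(tsq t) ^ p * arrNorm Ψ := by
  induction p with
  | zero => rw [pow_zero, pow_zero, one_mul, one_mul]; rfl
  | succ p ih =>
    have hkp : ((k + p : ℕ) : ℝ) ≤ ((k + (p + 1) : ℕ) : ℝ) := by gcongr; omega
    calc arrNorm (Scre t (Siter t p Ψ))
        ≤ (((k + p : ℕ) : ℝ) + 1) * √(tsq t) * arrNorm (Siter t p Ψ) := arrNorm_Scre_le t _
      _ ≤ (((k + p : ℕ) : ℝ) + 1) * √(tsq t)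
          * (((k + p : ℕ) : ℝ) ^ p * √(tsq t) ^ p * arrNorm Ψ) := by gcongr
      _ = ((k + (p + 1) : ℕ) : ℝ) * ((k + p : ℕ) : ℝ) ^ p * √(tsq t) ^ (p + 1) * arrNorm Ψ := by
          push_cast
          ring
      _ ≤ ((k + (p + 1) : ℕ) : ℝ) ^ (p + 1) * √(tsq t) ^ (p + 1) * arrNorm Ψ := by
          rw [pow_succ' (((k + (p + 1) : ℕ) : ℝ)) p]
          gcongr
          exact arrNorm_nonneg Ψ

lemma arrNorm_STiter_le {m : ℕ} (n p r : ℕ) (F : MArr d m) :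
    arrNorm (STiter t n p r F) ≤ (n : ℝ) ^ p * √(tsq t) ^ (p + r) * arrNorm F := by
  unfold STiter
  split_ifs with h
  · rw [arrNorm_castArr]
    calc _ ≤ ((m - r + p : ℕ) : ℝ) ^ p * √(tsq t) ^ p * arrNorm (Titer (k := m - r) t r
            (castArr (by omega) F)) := arrNorm_Siter_le t p _
      _ ≤ ((m - r + p : ℕ) : ℝ) ^ p * √(tsq t) ^ p * (√(tsq t) ^ r * arrNorm F) := by
          gcongr
          exact (arrNorm_Titer_le t r _).trans_eq (by rw [arrNorm_castArr])
      _ = (n : ℝ) ^ p * √(tsq t) ^ (p + r) * arrNorm F := by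
          rw [h.2]
          ring
  · rw [arrNorm_zero]
    exact mul_nonneg (by positivity) (arrNorm_nonneg F)

theorem arrNorm_Rop_le (ht : t ≠ 0) {n : ℕ} (F : MArr d (n - 1)) :
    arrNorm (Rop n t F) ≤ (n : ℝ) ^ (n + 1) * (√(tsq t))⁻¹ * arrNorm F := by
  have hτ : 0 < tsq t := tsq_pos t ht
  have term_le : ∀ p ∈ Finset.Icc 1 n, arrNorm (rCoeff (tsq t) p • STiter t n p (p - 1) F)
      ≤ (n : ℝ) ^ n * (√(tsq t))⁻¹ * arrNorm F := by
    intro p hp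
    obtain ⟨hp1, hpn⟩ := Finset.mem_Icc.mp hp
    obtain ⟨q, rfl⟩ : ∃ q, p = q + 1 := ⟨p - 1, by omega⟩
    have hn : (1 : ℝ) ≤ n := by exact_mod_cast hp1.trans hpn
    rw [arrNorm_smul]
    calc _ ≤ (tsq t ^ (q + 1))⁻¹ * ((n : ℝ) ^ (q + 1) * √(tsq t) ^ (q + 1 + q) * arrNorm F) :=
          mul_le_mul (abs_rCoeff_le hτ _) (arrNorm_STiter_le t _ _ _ F) (arrNorm_nonneg _)
            (by positivity)
      _ = (n : ℝ) ^ (q + 1) * (√(tsq t))⁻¹ * arrNorm F := by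
          have hτs : tsq t ^ (q + 1) = √(tsq t) ^ (2 * (q + 1)) := by
            rw [pow_mul, Real.sq_sqrt (tsq_nonneg t)]
          rw [hτs]
          field_simp
          ring
      _ ≤ (n : ℝ) ^ n * (√(tsq t))⁻¹ * arrNorm F :=
          mul_le_mul_of_nonneg_right (mul_le_mul_of_nonneg_right (pow_le_pow_right₀ hn hpn)
            (by positivity)) (arrNorm_nonneg F)
  calc arrNorm (Rop n t F)
      ≤ ∑ p ∈ Finset.Icc 1 n, arrNorm (rCoeff (tsq t) p • STiter t n p (p - 1) F) := by
        rw [Rop_eq_sum]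
        exact arrNorm_sum_le _ _
    _ ≤ ∑ _p ∈ Finset.Icc 1 n, (n : ℝ) ^ n * (√(tsq t))⁻¹ * arrNorm F := Finset.sum_le_sum term_le
    _ = (n : ℝ) ^ (n + 1) * (√(tsq t))⁻¹ * arrNorm F := by
        rw [Finset.sum_const, Nat.card_Icc, nsmul_eq_mul, add_tsub_cancel_right]
        ring

end Norm

/-- subsection 4.1, Proposition 4.1 / `C2`: the creation/annihilation
operators on symmetric arrays satisfy `T_{k+1}S_k = ‖t‖² I + S_{k-1}T_k`; the operator
`R_{n-1}` solves the underdetermined system `T_n Ψ = F` and satisfies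
`‖R_{n-1}‖ ≤ C_n ‖t‖⁻¹` with `C` depending only on `n` and `d`. -/
theorem statement17 (d n : ℕ) (hn : 1 ≤ n) :
    -- (i) the commutation relation on `M_k`, `k ≥ 1`
    (∀ t : Fin d → ℝ, t ≠ 0 → ∀ k : ℕ, ∀ Ψ : MArr d (k + 1), MSymm Ψ →
      Tann t (Scre t Ψ) = tsq t • Ψ + Scre t (Tann t Ψ)) ∧
    -- (ii) `R` produces a (symmetric) solution of `T_n Ψ_n = F`
    (∀ t : Fin d → ℝ, t ≠ 0 → ∀ F : MArr d (n - 1), MSymm F →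
      MSymm (Rop n t F) ∧
      Tann (k := n - 1) t (castArr (show n = (n - 1) + 1 by omega) (Rop n t F)) = F) ∧
    -- (iii) the norm bound, with a constant depending only on `n` and `d`
    (∃ C : ℝ, ∀ t : Fin d → ℝ, t ≠ 0 → ∀ F : MArr d (n - 1), MSymm F →
      arrNorm (Rop n t F) ≤ C * (Real.sqrt (tsq t))⁻¹ * arrNorm F) := by
  obtain ⟨m, rfl⟩ : ∃ m, n = m + 1 := ⟨n - 1, by omega⟩
  exact ⟨fun t _ _ Ψ _ => Tann_Scre t Ψ,
    fun t ht F hF => ⟨hF.rop t (m + 1), Tann_Rop t (tsq_pos t ht).ne' (m := m) F⟩,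
    _, fun t ht F _ => arrNorm_Rop_le t ht F⟩

end
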